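/- Let L be a finitary first-order language that is relational (no function symbols and no constant symbols) and let φ be an L-sentence. If there exists a natural number n ≥ 1 such that ¬φ has no models of cardinality n (i.e., every L-structure with exactly n elements satisfies φ), then there is an L-sentence χ expressing θ(φ). -/

import Mathlib

/-!
Let `χ` say "for some `x₁, …, xₙ`, not necessarily distinct, the sentence `φ` holds when its
quantifiers are restricted to `{x₁, …, xₙ}`". In a relational language every subset is a
substructure, so `χ` holds iff some nonempty substructure with at most `n` elements satisfies `φ`.
Conversely, a nonempty substructure `S ⊨ φ` either has at most `n` elements, and is then such a
substructure itself, or contains an `n`-element subset, which satisfies `φ` by hypothesis.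
-/

open FirstOrder Language Set

universe u v

namespace FirstOrder.Language

namespace BoundedFormula

variable {L : Language} {α : Type*} [Finite α]

/-- Restricts every quantifier of a formula to the values of its free variables. -/
noncomputable def relativize : ∀ {m : ℕ}, L.BoundedFormula α m → L.BoundedFormula α m
  | _, falsum => falsum
  | _, equal t₁ t₂ => equal t₁ t₂
  | _, rel R ts => rel R ts
  | _, imp ψ₁ ψ₂ => ψ₁.relativize.imp ψ₂.relativize
  | m, all ψ =>
    all ((iSup fun a : α => (Term.var (Sum.inr (Fin.last m))).bdEqual (Term.var (Sum.inl a))).imp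
      ψ.relativize)

theorem realize_relativize {M N : Type*} [L.Structure M] [L.Structure N] (f : N ↪[L] M)
    {v : α → N} (hv : Function.Surjective v) {m : ℕ} (ψ : L.BoundedFormula α m)
    (xs : Fin m → N) : ψ.relativize.Realize (f ∘ v) (f ∘ xs) ↔ ψ.Realize v xs := by
  induction ψ with
  | falsum => rfl
  | equal t₁ t₂ =>
    simp only [relativize, Realize, ← Sum.comp_elim, HomClass.realize_term,
      f.injective.eq_iff]
  | rel R ts =>
    simp only [relativize, Realize, ← Sum.comp_elim, HomClass.realize_term]
    exact f.map_rel R _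
  | imp ψ₁ ψ₂ ih₁ ih₂ => simp only [relativize, realize_imp, ih₁, ih₂]
  | all ψ ih =>
    simp only [relativize, realize_all, realize_imp, realize_iSup, realize_bdEqual,
      Term.realize_var, Sum.elim_inr, Sum.elim_inl, Fin.snoc_last, forall_exists_index]
    refine ⟨fun H y => ?_, fun H y a hya => ?_⟩
    · obtain ⟨a, rfl⟩ := hv y
      rw [← ih, Fin.comp_snoc]
      exact H _ a rfl
    · rw [hya, Function.comp_apply, ← Fin.comp_snoc, ih]
      exact H _

end BoundedFormula

namespace Sentence

variable {L : Language}

noncomputable def existsRelativize (φ : L.Sentence) (β : Type*) [Finite β] : L.Sentence :=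
  Formula.iExs β (Formula.relabel Sum.inr (Formula.relabel Empty.elim φ).relativize)

theorem realize_existsRelativize [L.IsRelational] {M : Type*} [L.Structure M] (φ : L.Sentence)
    (β : Type*) [Finite β] :
    M ⊨ φ.existsRelativize β ↔ ∃ x : β → M, Substructure.closure L (range x) ⊨ φ := by
  simp only [Sentence.Realize, existsRelativize, Formula.realize_iExs,
    Formula.realize_relabel, Sum.elim_comp_inr]
  refine exists_congr fun x => ?_
  set S := Substructure.closure L (range x)
  let y : β → S := fun b => ⟨x b, by simp [S]⟩
  have hy : Function.Surjective y := by
    rintro ⟨_, hs⟩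
    obtain ⟨b, rfl⟩ := (Substructure.mem_closure_iff_of_isRelational L _ _).mp hs
    exact ⟨b, rfl⟩
  have hrel := BoundedFormula.realize_relativize S.subtype hy (Formula.relabel Empty.elim φ) default
  rwa [Unique.eq_default (S.subtype ∘ default), ← Formula.Realize, ← Formula.Realize,
    Formula.realize_relabel, Unique.eq_default (y ∘ Empty.elim)] at hrel

end Sentence

end FirstOrder.Language

theorem theta_expressible_of_no_models_of_card
    {L : FirstOrder.Language.{u, v}} [L.IsRelational] (φ : L.Sentence)
    (n : ℕ) (hn : 1 ≤ n)
    (h : ∀ (M : Type (max u v)) [L.Structure M], Nat.card M = n → M ⊨ φ) :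
    ∃ χ : L.Sentence,
      ∀ (M : Type (max u v)) [L.Structure M] [Nonempty M],
        M ⊨ χ ↔ ∃ S : L.Substructure M, Nonempty S ∧ S ⊨ φ := by
  refine ⟨φ.existsRelativize (Fin n), fun M _ _ => ?_⟩
  rw [Sentence.realize_existsRelativize]
  constructor
  · rintro ⟨x, hx⟩
    exact ⟨Substructure.closure L (range x),
      ⟨⟨x ⟨0, hn⟩, Substructure.subset_closure ⟨_, rfl⟩⟩⟩, hx⟩
  · rintro ⟨S, _, hS⟩
    obtain ⟨⟨e⟩⟩ | ⟨⟨e⟩⟩ := Function.Embedding.total S (Fin n)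
    · have hsurj : Function.Surjective (Function.invFun e) :=
        Function.invFun_surjective e.injective
      refine ⟨Subtype.val ∘ Function.invFun e, ?_⟩
      rwa [show Substructure.closure L (range (Subtype.val ∘ Function.invFun e)) = S from
        SetLike.coe_injective (by simp [range_comp, hsurj.range_eq])]
    · have hinj : Function.Injective (Subtype.val ∘ e) := Subtype.val_injective.comp e.injective
      refine ⟨Subtype.val ∘ e, h _ ?_⟩
      rw [← SetLike.coe_sort_coe, Substructure.closure_eq_of_isRelational,
        Nat.card_range_of_injective hinj, Nat.card_fin]
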